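/- In the ambient setup with a set F ⊆ E of free edges disjoint from B, consider the polynomial system in MvPolynomial E (ZMod 3) consisting of: (i) X_e² − X_e for every e ∈ F and X_e³ − X_e for every e ∉ F; (ii) X_e − β(e) for every boundary edge e ∈ B; (iii) X_{t(τ,0)} + X_{t(τ,1)} + X_{t(τ,2)} for every triangle τ; and (iv) for every triangle τ, the polynomial obtained from the distinguishing polynomial f_τ by substituting X_{t(τ,i)} for its i-th variable. Then a point x : E → ZMod 3 is a common zero of this system if and only if x(e) = β(e) for every e ∈ B, x(e) ∈ {0,1} for every e ∈ F, and for every triangle τ the triple (x(t(τ,0)), x(t(τ,1)), x(t(τ,2))) belongs to A(τ). Consequently, the variety of the side-free puzzle ideal is in one-one correspondence with the set of side-free tilings (tilings whose values on the free edges are unconstrained except for lying in {0,1}). -/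

import Mathlib

open MvPolynomial

/-- The defining polynomial system of the side-free puzzle ideal: quadratic
field equations on the free edges, cubic field equations on the remaining
edges, boundary equations, atomicity equations, and the distinguishing
polynomials applied to each triangle. -/
def sideFreePuzzleSystem {E T : Type*} (B F : Set E) (β : E → ZMod 3)
    (t : T → Fin 3 → E) (f : T → MvPolynomial (Fin 3) (ZMod 3)) :
    Set (MvPolynomial E (ZMod 3)) :=
  ((fun e : E => X e ^ 2 - X e) '' F) ∪
  ((fun e : E => X e ^ 3 - X e) '' Fᶜ) ∪
  ((fun e : E => X e - C (β e)) '' B) ∪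
  (Set.range fun τ : T => X (t τ 0) + X (t τ 1) + X (t τ 2)) ∪
  (Set.range fun τ : T => rename (t τ) (f τ))

/-!
Evaluation at `x` is a ring homomorphism, so `x` kills the ideal iff it kills each generator,
and the generators impose independent pointwise conditions: `X e ^ 2 - X e` confines `x e` to
`{0, 1}`, `X e ^ 3 - X e` vanishes on all of `ZMod 3` by Fermat's little theorem, and on a
triangle whose edge values sum to zero the distinguishing polynomial vanishes exactly on the
allowed pieces.
-/

theorem sq_eq_self_iff {M₀ : Type*} [MonoidWithZero M₀] [IsRightCancelMulZero M₀] {a : M₀} :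
    a ^ 2 = a ↔ a = 0 ∨ a = 1 :=
  ⟨eq_zero_or_one_of_sq_eq_self, by rintro (rfl | rfl) <;> simp⟩

theorem RingHom.forall_mem_span_eq_zero_iff {R S : Type*} [CommSemiring R] [Semiring S]
    (φ : R →+* S) (s : Set R) :
    (∀ p ∈ Ideal.span s, φ p = 0) ↔ ∀ p ∈ s, φ p = 0 :=
  ⟨fun h p hp => h p (Ideal.subset_span hp),
    fun h _ hp => (Ideal.span_le (I := RingHom.ker φ)).2 h hp⟩

theorem add_add_eq_zero_and_eval_eq_zero_iff_mem {A : Set (Fin 3 → ZMod 3)}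
    (hA : ∀ v ∈ A, v 0 + v 1 + v 2 = 0) {f : MvPolynomial (Fin 3) (ZMod 3)}
    (hf : ∀ v : Fin 3 → ZMod 3, v 0 + v 1 + v 2 = 0 → (eval v f = 0 ↔ v ∈ A))
    (v : Fin 3 → ZMod 3) :
    v 0 + v 1 + v 2 = 0 ∧ eval v f = 0 ↔ v ∈ A :=
  ⟨fun ⟨hsum, hev⟩ => (hf v hsum).1 hev, fun hv => ⟨hA v hv, (hf v (hA v hv)).2 hv⟩⟩

theorem forall_mem_sideFreePuzzleSystem_eval_eq_zero_iff {E T : Type*} (B F : Set E)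
    (β : E → ZMod 3) (t : T → Fin 3 → E) (f : T → MvPolynomial (Fin 3) (ZMod 3))
    (x : E → ZMod 3) :
    (∀ p ∈ sideFreePuzzleSystem B F β t f, eval x p = 0) ↔
      (∀ e ∈ B, x e = β e) ∧ (∀ e ∈ F, x e = 0 ∨ x e = 1) ∧
        ∀ τ, x (t τ 0) + x (t τ 1) + x (t τ 2) = 0 ∧
          eval (fun i => x (t τ i)) (f τ) = 0 := by
  have fermat : ∀ a : ZMod 3, a ^ 3 - a = 0 := fun a => sub_eq_zero.2 (ZMod.pow_card a)
  simp only [sideFreePuzzleSystem, Set.mem_union, or_imp, forall_and, Set.forall_mem_image,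
    Set.forall_mem_range, map_sub, map_pow, map_add, eval_X, eval_C, eval_rename,
    fermat, sub_eq_zero, sq_eq_self_iff, Function.comp_def, implies_true, and_true]
  tauto

theorem sideFreePuzzleSystem_zeros_eq_sideFree_tilings_general
    {E T : Type*}
    (B F : Set E)
    (β : E → ZMod 3) (t : T → Fin 3 → E)
    (A : T → Set (Fin 3 → ZMod 3))
    (hA : ∀ τ, ∀ v ∈ A τ, v 0 + v 1 + v 2 = 0)
    (f : T → MvPolynomial (Fin 3) (ZMod 3))
    (hf : ∀ τ, ∀ v : Fin 3 → ZMod 3, v 0 + v 1 + v 2 = 0 →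
      (MvPolynomial.eval v (f τ) = 0 ↔ v ∈ A τ)) :
    (∀ x : E → ZMod 3,
      (∀ p ∈ sideFreePuzzleSystem B F β t f, MvPolynomial.eval x p = 0) ↔
        ((∀ e ∈ B, x e = β e) ∧ (∀ e ∈ F, x e = 0 ∨ x e = 1) ∧
          ∀ τ, (fun i => x (t τ i)) ∈ A τ)) ∧
    {x : E → ZMod 3 |
        ∀ p ∈ Ideal.span (sideFreePuzzleSystem B F β t f), MvPolynomial.eval x p = 0} =
      {x : E → ZMod 3 | (∀ e ∈ B, x e = β e) ∧ (∀ e ∈ F, x e = 0 ∨ x e = 1) ∧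
          ∀ τ, (fun i => x (t τ i)) ∈ A τ} := by
  have zeros_iff : ∀ x : E → ZMod 3,
      (∀ p ∈ sideFreePuzzleSystem B F β t f, eval x p = 0) ↔
        (∀ e ∈ B, x e = β e) ∧ (∀ e ∈ F, x e = 0 ∨ x e = 1) ∧
          ∀ τ, (fun i => x (t τ i)) ∈ A τ := fun x => by
    simp only [forall_mem_sideFreePuzzleSystem_eval_eq_zero_iff,
      ← add_add_eq_zero_and_eval_eq_zero_iff_mem (hA _) (hf _)]
  refine ⟨zeros_iff, Set.ext fun x => ?_⟩
  exact ((eval x).forall_mem_span_eq_zero_iff _).trans (zeros_iff x)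

/-- a point `x : E → ZMod 3` is a common zero of the defining
polynomial system of the side-free puzzle ideal iff it matches the boundary
values on `B`, takes values in `{0,1}` on the free edges `F`, and restricts to
an allowed atomic piece on every triangle; consequently the variety of the
side-free puzzle ideal equals (hence is in one-one correspondence with) the
set of side-free tilings. -/
theorem sideFreePuzzleSystem_zeros_eq_sideFree_tilings
    {E T : Type*} [Fintype E] [Fintype T]
    (B F : Set E) (hBF : B ∩ F = ∅)
    (β : E → ZMod 3) (t : T → Fin 3 → E)
    (A : T → Set (Fin 3 → ZMod 3))
    (hA : ∀ τ, ∀ v ∈ A τ, v 0 + v 1 + v 2 = 0)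
    (f : T → MvPolynomial (Fin 3) (ZMod 3))
    (hf : ∀ τ, ∀ v : Fin 3 → ZMod 3, v 0 + v 1 + v 2 = 0 →
      (MvPolynomial.eval v (f τ) = 0 ↔ v ∈ A τ)) :
    (∀ x : E → ZMod 3,
      (∀ p ∈ sideFreePuzzleSystem B F β t f, MvPolynomial.eval x p = 0) ↔
        ((∀ e ∈ B, x e = β e) ∧ (∀ e ∈ F, x e = 0 ∨ x e = 1) ∧
          ∀ τ, (fun i => x (t τ i)) ∈ A τ)) ∧
    {x : E → ZMod 3 |
        ∀ p ∈ Ideal.span (sideFreePuzzleSystem B F β t f), MvPolynomial.eval x p = 0} =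
      {x : E → ZMod 3 | (∀ e ∈ B, x e = β e) ∧ (∀ e ∈ F, x e = 0 ∨ x e = 1) ∧
          ∀ τ, (fun i => x (t τ i)) ∈ A τ} :=
  sideFreePuzzleSystem_zeros_eq_sideFree_tilings_general B F β t A hA f hf
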